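/- arXiv:1509.04927 — 2 statements merged into one kernel-verified Lean document; each statement's English description precedes it below -/
import Mathlib

section
/- Let [v,X] be a node of G_M with level([v,X]) = l finite. Suppose [u_1,B] and [u_2,B] are two distinct nodes, each of which lies on every shortest strongly simple path from s to [v,X], and suppose level([u_1,A]) ≥ l and level([u_2,A]) ≥ l (where an undefined level counts as ≥ l). Then level([u_1,B]) ≠ level([u_2,B]). In particular, among the nodes [u,B] lying on all shortest strongly simple paths from s to [v,X] and satisfying level([u,A]) ≥ l, there is at most one of any given level, so the one of maximal level is unique if it exists. -/
/-!
Fix a shortest strongly simple path `P` from `s` to `[v,X]`; it passes through `[u₁,B]` and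
`[u₂,B]`. If `[u,B]` is the node at position `j` of `P` and `level([u,A]) ≥ l`, then
`level([u,B]) = j`, so the two levels are the two distinct positions.

The prefix of `P` gives `level([u,B]) ≤ j`. For the converse, suppose a strongly simple path `Q`
reaches a node `y` of `P` (at or after `[u,B]`) in fewer than `j` steps, avoiding the vertices of
`P` strictly between `[u,B]` and `y`. If `Q` avoids all vertices of `P` after `y`, then `Q`
followed by the rest of `P` is a strongly simple path to `[v,X]` shorter than `l`. Otherwise let
`z` be the first later node of `P` whose vertex `w` lies on `Q`.
* If `z = [w,B]`, then `w` is matched, and in both paths `w` is adjacent to its mate `x`: the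
  predecessor of `z` on `P` is `[x,A]`, and `Q` visits `x` next to `w`. This contradicts the
  choice of `z`, or the strong simplicity of `Q` when `[x,A] = y`.
* If `z = [w,A]` and `Q` visits `[w,B]`, then `Q` up to `[w,B]`, followed by the segment of `P`
  from `[u,B]` to `z` reversed with labels exchanged, is a strongly simple path to `[u,A]` shorter
  than `l`. This works because exchanging labels (and `s` with `t`) reverses the edges of `G_M`.
* If `Q` visits `z = [w,A]` itself, repeat the argument with `z` as the new `y` and `Q` cut at
  `z`; this terminates because `z` lies further along `P`.
-/

variable {V : Type*}

/-- `M` is a matching of the simple graph `G`: a set of edges of `G`,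
no two of which share a node. -/
def IsMatchingOn (G : SimpleGraph V) (M : Set (Sym2 V)) : Prop :=
  M ⊆ G.edgeSet ∧ ∀ e ∈ M, ∀ f ∈ M, ∀ v : V, v ∈ e → v ∈ f → e = f

/-- A node is `M`-free if it is incident to no edge of `M`. -/
def MFree (M : Set (Sym2 V)) (v : V) : Prop := ∀ e ∈ M, v ∉ e

/-- The two labels `A` and `B`. -/
inductive Lbl where
  | A : Lbl
  | B : Lbl

/-- The opposite label: `Ā = B` and `B̄ = A`. -/
def Lbl.flip : Lbl → Lbl
  | .A => .B
  | .B => .A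

/-- Nodes of the directed graph `G_M`: the nodes `[v,A]`, `[v,B]` for `v ∈ V`
together with two new nodes `s` and `t`. -/
inductive GMNode (V : Type*) where
  | inner : V → Lbl → GMNode V
  | s : GMNode V
  | t : GMNode V

/-- The directed adjacency of `G_M`: the edges `([v,A],[w,B])` and
`([w,A],[v,B])` for `(v,w) ∈ M`; the edges `([x,B],[y,A])` and `([y,B],[x,A])`
for `(x,y) ∈ E ∖ M`; and the edges `(s,[v,B])` and `([v,A],t)` for every
`M`-free node `v`. -/
def gmAdj (G : SimpleGraph V) (M : Set (Sym2 V)) : GMNode V → GMNode V → Prop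
  | .inner v .A, .inner w .B => s(v, w) ∈ M
  | .inner x .B, .inner y .A => s(x, y) ∈ G.edgeSet \ M
  | .s, .inner v .B => MFree M v
  | .inner v .A, .t => MFree M v
  | _, _ => False

/-- `p` is a directed path from `u` to `v` with respect to the relation `R`. -/
def IsDirPath {α : Type*} (R : α → α → Prop) (p : List α) (u v : α) : Prop :=
  p.Chain' R ∧ p.head? = some u ∧ p.getLast? = some v

/-- A list of nodes of `G_M` is strongly simple if it has no repeated node and
contains, for each `v ∈ V`, at most one of the two nodes `[v,A]`, `[v,B]`. -/
def StronglySimple (p : List (GMNode V)) : Prop :=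
  p.Nodup ∧ ∀ v : V, ¬(GMNode.inner v .A ∈ p ∧ GMNode.inner v .B ∈ p)

/-- The level of a node of `G_M`: the length of a shortest strongly simple path
from `s` to it (`⊤` if there is no such path, i.e. the level is undefined). -/
noncomputable def gmLevel (G : SimpleGraph V) (M : Set (Sym2 V)) (x : GMNode V) : ℕ∞ :=
  sInf ((fun p : List (GMNode V) => ((p.length - 1 : ℕ) : ℕ∞)) ''
    {p : List (GMNode V) | IsDirPath (gmAdj G M) p GMNode.s x ∧ StronglySimple p})


section DirPath

variable {α : Type*} {R : α → α → Prop} {p q : List α} {a b c x : α}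

theorem IsDirPath.isChain (h : IsDirPath R p a b) : p.IsChain R := h.1

theorem IsDirPath.ne_nil (h : IsDirPath R p a b) : p ≠ [] := by
  rintro rfl
  simp [IsDirPath] at h

theorem IsDirPath.append (hp : IsDirPath R p a b) (hq : IsDirPath R (b :: q) b c) :
    IsDirPath R (p ++ q) a c := by
  obtain ⟨hpc, hph, hpl⟩ := hp
  obtain ⟨hqc, -, hql⟩ := hq
  refine ⟨hpc.append hqc.tail fun x hx y hy => ?_, by simp [List.head?_append, hph], ?_⟩
  · rw [hpl, Option.mem_some_iff] at hx
    exact hx ▸ hqc.rel_head? hy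
  · cases q with
    | nil => simpa [hpl] using hql
    | cons d q => simpa using hql

theorem IsDirPath.of_append_left (h : IsDirPath R (p ++ q) a c) (hb : p.getLast? = some b) :
    IsDirPath R p a b := by
  have hp : p ≠ [] := by rintro rfl; simp at hb
  refine ⟨h.isChain.left_of_append, ?_, hb⟩
  simpa [List.head?_append, List.head?_eq_none_iff.not.mpr hp] using h.2.1

theorem IsDirPath.of_append_right (h : IsDirPath R (p ++ q) a c) (hb : q.head? = some b) :
    IsDirPath R q b c := by
  have hq : q ≠ [] := by rintro rfl; simp at hb
  refine ⟨h.isChain.right_of_append, hb, ?_⟩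
  simpa [List.getLast?_append, List.getLast?_eq_none_iff.not.mpr hq] using h.2.2

theorem IsDirPath.reverse_map {β : Type*} {S : β → β → Prop} (f : α → β)
    (hf : ∀ x y, R x y → S (f y) (f x)) (h : IsDirPath R p a b) :
    IsDirPath S (p.reverse.map f) (f b) (f a) := by
  obtain ⟨hc, hh, hl⟩ := h
  refine ⟨?_, by simp [hl], by simp [hh]⟩
  show List.IsChain _ _
  rw [List.isChain_map, List.isChain_reverse]
  exact hc.imp fun x y hxy => hf x y hxy

theorem IsDirPath.notMem_of_forall_not_rel_to (h : IsDirPath R p a b) (hx : ∀ y, ¬ R y x)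
    (ha : a ≠ x) : x ∉ p := by
  intro hmem
  obtain ⟨s, t, rfl⟩ := List.append_of_mem hmem
  rcases List.eq_nil_or_concat s with rfl | ⟨s, y, rfl⟩
  · simp only [IsDirPath, List.nil_append, List.head?_cons, Option.some.injEq] at h
    exact ha h.2.1.symm
  · exact hx y ((List.isChain_append.mp h.isChain).2.2 y (by simp) x (by simp))

theorem IsDirPath.notMem_of_forall_not_rel_from (h : IsDirPath R p a b) (hx : ∀ y, ¬ R x y)
    (hb : b ≠ x) : x ∉ p := by
  simpa using (h.reverse_map (S := fun y z => R z y) id fun _ _ h => h).notMem_of_forall_not_rel_to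
    (by simpa using hx) hb

end DirPath

theorem exists_first_common_of_not_disjoint {α β : Type*} (f : α → β) {Q R : List α}
    (h : ¬ (Q.map f).Disjoint (R.map f)) :
    ∃ mid z rest Q₁ z' Q₂, R = mid ++ z :: rest ∧ Q = Q₁ ++ z' :: Q₂ ∧ f z' = f z ∧
      (Q.map f).Disjoint (mid.map f) := by
  classical
  cases hfind : R.find? (fun n => f n ∈ Q.map f) with
  | none =>
    refine absurd (fun a ha hb => ?_) h
    obtain ⟨x, hx, rfl⟩ := List.mem_map.mp hb
    exact List.find?_eq_none.mp hfind x hx (by simpa using ha)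
  | some z =>
    obtain ⟨hzQ, mid, rest, hR, hmid⟩ := List.find?_eq_some_iff_append.mp hfind
    obtain ⟨z', hz'Q, hzz'⟩ : ∃ z' ∈ Q, f z' = f z := by simpa using hzQ
    obtain ⟨Q₁, Q₂, hQ⟩ := List.append_of_mem hz'Q
    refine ⟨mid, z, rest, Q₁, z', Q₂, hR, hQ, hzz', fun a ha hb => ?_⟩
    obtain ⟨x, hx, rfl⟩ := List.mem_map.mp hb
    exact absurd ha (by simpa using hmid x hx)

namespace GMNode

def flip : GMNode V → GMNode V
  | inner v L => inner v L.flip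
  | s => t
  | t => s

def unlabel : GMNode V → GMNode V
  | inner v _ => inner v .A
  | x => x

@[simp] theorem flip_inner (v : V) (L : Lbl) : (inner v L).flip = inner v L.flip := rfl
@[simp] theorem flip_s : (s : GMNode V).flip = t := rfl
@[simp] theorem flip_t : (t : GMNode V).flip = s := rfl
@[simp] theorem unlabel_inner (v : V) (L : Lbl) : (inner v L).unlabel = inner v .A := rfl
@[simp] theorem unlabel_s : (s : GMNode V).unlabel = s := rfl
@[simp] theorem unlabel_t : (t : GMNode V).unlabel = t := rfl

theorem flip_involutive : Function.Involutive (flip : GMNode V → GMNode V) := by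
  rintro (⟨v, _ | _⟩ | _ | _) <;> rfl

theorem exists_eq_inner {z : GMNode V} (hs : z ≠ s) (ht : z ≠ t) : ∃ w L, z = inner w L := by
  cases z <;> simp_all

theorem eq_inner_of_unlabel_eq {x : GMNode V} {v : V} (h : x.unlabel = inner v .A) :
    ∃ L, x = inner v L := by
  cases x <;> simp_all

theorem unlabel_flip_of_ne {x : GMNode V} (hs : x ≠ s) (ht : x ≠ t) :
    x.flip.unlabel = x.unlabel := by
  cases x <;> simp_all

end GMNode

open GMNode

section StronglySimple

variable {p q : List (GMNode V)}

theorem stronglySimple_iff_nodup_map_unlabel :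
    StronglySimple p ↔ (p.map unlabel).Nodup := by
  refine ⟨fun h => h.1.map_on ?_, fun h => ⟨h.of_map _, fun v ⟨hA, hB⟩ => ?_⟩⟩
  · rintro (⟨x, _ | _⟩ | _ | _) hx (⟨y, _ | _⟩ | _ | _) hy hxy <;>
      simp only [unlabel_inner, unlabel_s, unlabel_t, inner.injEq, reduceCtorEq, and_true] at hxy
      <;> grind [StronglySimple]
  · cases List.inj_on_of_nodup_map h hA hB rfl

theorem StronglySimple.sublist (h : StronglySimple p) (hq : q.Sublist p) : StronglySimple q :=
  stronglySimple_iff_nodup_map_unlabel.2 <|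
    (stronglySimple_iff_nodup_map_unlabel.1 h).sublist (hq.map _)

theorem stronglySimple_append :
    StronglySimple (p ++ q) ↔
      StronglySimple p ∧ StronglySimple q ∧ (p.map unlabel).Disjoint (q.map unlabel) := by
  simp only [stronglySimple_iff_nodup_map_unlabel, List.map_append, List.nodup_append']

theorem StronglySimple.reverse_map_flip (h : StronglySimple p) :
    StronglySimple (p.reverse.map flip) := by
  refine ⟨(List.nodup_reverse.2 h.1).map flip_involutive.injective, fun v ⟨hA, hB⟩ => ?_⟩
  rw [List.mem_map_of_involutive flip_involutive, List.mem_reverse] at hA hB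
  exact h.2 v ⟨hB, hA⟩

end StronglySimple

section GM

variable {G : SimpleGraph V} {M : Set (Sym2 V)}

theorem not_gmAdj_to_s (a : GMNode V) : ¬ gmAdj G M a .s := by
  rcases a with ⟨_, _ | _⟩ | _ | _ <;> simp [gmAdj]

theorem not_gmAdj_from_t (b : GMNode V) : ¬ gmAdj G M .t b := by
  rcases b with ⟨_, _ | _⟩ | _ | _ <;> simp [gmAdj]

theorem gmAdj.flip {a b : GMNode V} (h : gmAdj G M a b) : gmAdj G M b.flip a.flip := by
  rcases a with ⟨_, _ | _⟩ | _ | _ <;> rcases b with ⟨_, _ | _⟩ | _ | _ <;>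
    simp_all [gmAdj, Lbl.flip, Sym2.eq_swap]

theorem IsMatchingOn.eq_of_mem {x x' w : V} (hM : IsMatchingOn G M)
    (h : s(x, w) ∈ M) (h' : s(x', w) ∈ M) : x = x' := by
  have := hM.2 _ h _ h' w (by simp) (by simp)
  aesop

theorem IsMatchingOn.eq_of_gmAdj_to_B (hM : IsMatchingOn G M) {x w : V} {a : GMNode V}
    (hxw : s(x, w) ∈ M) (h : gmAdj G M a (.inner w .B)) : a = .inner x .A := by
  rcases a with ⟨x', _ | _⟩ | _ | _ <;> simp only [gmAdj] at h
  · rw [hM.eq_of_mem h hxw]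
  · exact (h _ hxw (by simp)).elim

theorem IsMatchingOn.eq_of_gmAdj_from_A (hM : IsMatchingOn G M) {x w : V} {b : GMNode V}
    (hxw : s(x, w) ∈ M) (h : gmAdj G M (.inner w .A) b) : b = .inner x .B := by
  rcases b with ⟨x', _ | _⟩ | _ | _ <;> simp only [gmAdj] at h
  · rw [Sym2.eq_swap] at h
    rw [hM.eq_of_mem h hxw]
  · exact (h _ hxw (by simp)).elim

theorem IsDirPath.s_notMem {p : List (GMNode V)} {a b : GMNode V}
    (h : IsDirPath (gmAdj G M) p a b) (ha : a ≠ .s) : .s ∉ p :=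
  h.notMem_of_forall_not_rel_to not_gmAdj_to_s ha

theorem IsDirPath.t_notMem {p : List (GMNode V)} {a b : GMNode V}
    (h : IsDirPath (gmAdj G M) p a b) (hb : b ≠ .t) : .t ∉ p :=
  h.notMem_of_forall_not_rel_from not_gmAdj_from_t hb

def IsSSPath (G : SimpleGraph V) (M : Set (Sym2 V)) (p : List (GMNode V)) (x : GMNode V) :
    Prop :=
  IsDirPath (gmAdj G M) p .s x ∧ StronglySimple p

theorem gmLevel_le {p : List (GMNode V)} {x : GMNode V} (hp : IsSSPath G M p x) :
    gmLevel G M x ≤ (p.length - 1 : ℕ) :=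
  sInf_le ⟨p, hp, rfl⟩

theorem le_gmLevel_iff {x : GMNode V} {n : ℕ} :
    (n : ℕ∞) ≤ gmLevel G M x ↔ ∀ p, IsSSPath G M p x → n < p.length := by
  simp only [gmLevel, le_sInf_iff, Set.forall_mem_image, Nat.cast_le]
  refine forall₂_congr fun p hp => ?_
  have := List.length_pos_of_ne_nil hp.1.ne_nil
  omega

theorem exists_isSSPath_of_gmLevel_eq {x : GMNode V} {l : ℕ} (hl : gmLevel G M x = l) :
    ∃ p, IsSSPath G M p x ∧ p.length = l + 1 := by
  have hne : {p | IsSSPath G M p x}.Nonempty := by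
    by_contra h
    have : gmLevel G M x = ⊤ := by
      show sInf (_ '' {p | IsSSPath G M p x}) = ⊤
      simp [Set.not_nonempty_iff_eq_empty.mp h]
    simp [this] at hl
  obtain ⟨p, hp, hpl⟩ : gmLevel G M x ∈ _ '' {p | IsSSPath G M p x} := csInf_mem (hne.image _)
  have hpl' : p.length - 1 = l := Nat.cast_injective (R := ℕ∞) (hpl.trans hl)
  have := List.length_pos_of_ne_nil hp.1.ne_nil
  exact ⟨p, hp, by omega⟩

end GM

section Splice

variable {G : SimpleGraph V} {M : Set (Sym2 V)} {Q R : List (GMNode V)}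

theorem IsSSPath.prefix {z y : GMNode V} (hQ : IsSSPath G M (Q ++ z :: R) y) :
    IsSSPath G M (Q ++ [z]) z :=
  ⟨IsDirPath.of_append_left (q := R) (by simpa using hQ.1) (by simp), hQ.2.sublist (by simp)⟩

theorem IsSSPath.append {x y : GMNode V} (hQ : IsSSPath G M Q y)
    (hR : IsDirPath (gmAdj G M) (y :: R) y x) (hRss : StronglySimple R)
    (hdisj : (Q.map unlabel).Disjoint (R.map unlabel)) : IsSSPath G M (Q ++ R) x :=
  ⟨hQ.1.append hR, stronglySimple_append.2 ⟨hQ.2, hRss, hdisj⟩⟩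

theorem IsSSPath.append_reverse_map_flip {a z : GMNode V} (hQ : IsSSPath G M Q z.flip)
    (hR : IsDirPath (gmAdj G M) (R ++ [z]) a z) (hRss : StronglySimple R) (hs : .s ∉ R)
    (ht : .t ∉ R) (hdisj : (Q.map unlabel).Disjoint (R.map unlabel)) :
    IsSSPath G M (Q ++ R.reverse.map flip) a.flip := by
  refine hQ.append ?_ hRss.reverse_map_flip ?_
  · simpa using hR.reverse_map flip fun _ _ h => h.flip
  · have : (R.reverse.map flip).map unlabel = (R.map unlabel).reverse := by
      rw [List.map_map, List.map_reverse]
      exact congrArg _ (List.map_congr_left fun x hx =>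
        unlabel_flip_of_ne (ne_of_mem_of_not_mem hx hs) (ne_of_mem_of_not_mem hx ht))
    rwa [this, List.disjoint_reverse_right]

end Splice

section FirstCommon

variable {G : SimpleGraph V} {M : Set (Sym2 V)} {Q₁ Q₂ seg mid : List (GMNode V)}
  {y z' : GMNode V} {w : V}

theorem prefix_disjoint_of_first_common (hQ : IsSSPath G M (Q₁ ++ z' :: Q₂) y)
    (hyz' : y.unlabel ≠ z'.unlabel)
    (hseg : ((Q₁ ++ z' :: Q₂).map unlabel).Disjoint (seg.map unlabel))
    (hmid : ((Q₁ ++ z' :: Q₂).map unlabel).Disjoint (mid.map unlabel)) :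
    ((Q₁ ++ [z']).map unlabel).Disjoint ((seg ++ y :: mid).map unlabel) := by
  have hsub : (Q₁ ++ [z']).map unlabel ⊆ (Q₁ ++ z' :: Q₂).map unlabel :=
    List.map_subset _ fun a ha => by
      simp only [List.mem_append, List.mem_cons, List.not_mem_nil, or_false] at ha ⊢; tauto
  have hQ₂ : Q₂ ≠ [] := by
    rintro rfl
    exact hyz' (congrArg unlabel (by simpa using hQ.1.2.2.symm))
  have hy : y ∈ Q₂ := by
    obtain ⟨q, Q₂', rfl⟩ := List.exists_cons_of_ne_nil hQ₂
    exact List.mem_of_getLast? (by simpa using hQ.1.2.2)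
  have hnd := stronglySimple_iff_nodup_map_unlabel.1 (show StronglySimple ((Q₁ ++ [z']) ++ Q₂)
    by simpa using hQ.2)
  rw [List.map_append, List.nodup_append'] at hnd
  generalize (Q₁ ++ [z']).map unlabel = L at hsub hnd ⊢
  simp only [List.map_append, List.map_cons, List.disjoint_append_right,
    List.disjoint_cons_right]
  exact ⟨List.disjoint_of_subset_left hsub hseg,
    fun h => hnd.2.2 h (List.mem_map_of_mem hy), List.disjoint_of_subset_left hsub hmid⟩

theorem exists_mate_inner_A_mem (hR : IsDirPath (gmAdj G M) (y :: mid ++ [.inner w .B]) y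
    (.inner w .B)) (hy : y ≠ .s) : ∃ x, s(x, w) ∈ M ∧ .inner x .A ∈ y :: mid := by
  have ha := hR.isChain.rel_getLast_head_of_append (l₁ := y :: mid) (List.cons_ne_nil _ _)
    (List.cons_ne_nil _ [])
  have hmem := List.getLast_mem (l := y :: mid) (List.cons_ne_nil _ _)
  have hs := hR.s_notMem hy
  generalize (y :: mid).getLast _ = a at ha hmem
  rcases a with ⟨x, _ | _⟩ | _ | _ <;> simp only [gmAdj, List.head_cons] at ha
  · exact ⟨x, ha, hmem⟩
  · exact (hs (by simp_all)).elim

theorem false_of_first_common_inner_B (hM : IsMatchingOn G M)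
    (hR : IsDirPath (gmAdj G M) (y :: mid ++ [.inner w .B]) y (.inner w .B)) (hy : y ≠ .s)
    (hQ : IsSSPath G M (Q₁ ++ z' :: Q₂) y) (hz' : z'.unlabel = .inner w .A)
    (hpre : ((Q₁ ++ [z']).map unlabel).Disjoint ((y :: mid).map unlabel))
    (hmid : ((Q₁ ++ z' :: Q₂).map unlabel).Disjoint (mid.map unlabel)) : False := by
  obtain ⟨x, hxw, hx⟩ := exists_mate_inner_A_mem hR hy
  obtain ⟨Z, rfl⟩ := eq_inner_of_unlabel_eq hz'
  cases Z with
  | B =>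
    obtain rfl | ⟨Q₁, q, rfl⟩ := List.eq_nil_or_concat Q₁
    · simpa using hQ.1.2.1
    have hq : gmAdj G M q (.inner w .B) :=
      List.isChain_pair.mp (hQ.1.isChain.infix ⟨Q₁, Q₂, by simp⟩)
    rw [hM.eq_of_gmAdj_to_B hxw hq] at hpre
    exact hpre (by simp) (List.mem_map_of_mem hx)
  | A =>
    cases Q₂ with
    | nil =>
      obtain rfl : GMNode.inner w .A = y := by simpa using hQ.1.2.2
      exact hpre (a := .inner w .A) (by simp) (by simp)
    | cons q Q₂ =>
      have hq : gmAdj G M (.inner w .A) q :=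
        List.isChain_pair.mp (hQ.1.isChain.infix ⟨Q₁, Q₂, by simp⟩)
      rw [hM.eq_of_gmAdj_from_A hxw hq] at hQ hmid
      rcases List.mem_cons.mp hx with rfl | hx
      · exact hQ.2.2 x ⟨List.mem_of_getLast? hQ.1.2.2, by simp⟩
      · exact hmid (by simp) (List.mem_map_of_mem (f := unlabel) hx)

end FirstCommon

section Shortest

variable {G : SimpleGraph V} {M : Set (Sym2 V)} {P pre : List (GMNode V)}

theorem length_lt_of_avoids_suffix {x y : GMNode V} {Q : List (GMNode V)}
    (hP : IsSSPath G M P x) (hPmin : ∀ Q, IsSSPath G M Q x → P.length ≤ Q.length)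
    {rest : List (GMNode V)} (hsplit : P = pre ++ y :: rest) (hQ : IsSSPath G M Q y)
    (hdisj : (Q.map unlabel).Disjoint (rest.map unlabel)) : pre.length < Q.length := by
  have hR : IsDirPath (gmAdj G M) (y :: rest) y x := (hsplit ▸ hP.1).of_append_right rfl
  have := hPmin _ (hQ.append hR (hP.2.sublist (by simp [hsplit])) hdisj)
  simp only [hsplit, List.length_append, List.length_cons] at this
  omega

variable {v u : V} {X : Lbl}

theorem length_lt_of_avoids_segment (hM : IsMatchingOn G M) (hP : IsSSPath G M P (.inner v X))
    (hPmin : ∀ Q, IsSSPath G M Q (.inner v X) → P.length ≤ Q.length)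
    (hPA : ∀ Q, IsSSPath G M Q (.inner u .A) → P.length ≤ Q.length)
    {seg rest Q : List (GMNode V)} {y : GMNode V} (hsplit : P = pre ++ (seg ++ y :: rest))
    (hhead : (seg ++ y :: rest).head? = some (.inner u .B))
    (hQ : IsSSPath G M Q y) (hseg : (Q.map unlabel).Disjoint (seg.map unlabel)) :
    pre.length < Q.length := by
  have hbody : IsDirPath (gmAdj G M) (seg ++ y :: rest) (.inner u .B) (.inner v X) :=
    (hsplit ▸ hP.1).of_append_right hhead
  have hbody_ss : StronglySimple (seg ++ y :: rest) := hP.2.sublist (by simp [hsplit])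
  have hs := hbody.s_notMem (by simp)
  have ht := hbody.t_notMem (by simp)
  by_cases hrest : (Q.map unlabel).Disjoint (rest.map unlabel)
  · have := length_lt_of_avoids_suffix hP hPmin (pre := pre ++ seg) (by simp [hsplit]) hQ hrest
    simp only [List.length_append] at this
    omega
  obtain ⟨mid, z, rest', Q₁, z', Q₂, rfl, rfl, hzz', hmid⟩ :=
    exists_first_common_of_not_disjoint unlabel hrest
  have hyz : y.unlabel ≠ z'.unlabel := by
    have := stronglySimple_iff_nodup_map_unlabel.1
      (hbody_ss.sublist (List.sublist_append_right seg _))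
    rw [hzz']
    simp_all
  have hpre := prefix_disjoint_of_first_common hQ hyz hseg hmid
  obtain ⟨w, Y, rfl⟩ :=
    exists_eq_inner (z := z) (fun h => hs (by simp [h])) (fun h => ht (by simp [h]))
  obtain ⟨Z, rfl⟩ := eq_inner_of_unlabel_eq hzz'
  have hR : IsDirPath (gmAdj G M) (seg ++ y :: mid ++ [.inner w Y]) (.inner u .B) (.inner w Y) :=
    IsDirPath.of_append_left (q := rest') (by simpa using hbody) List.getLast?_concat
  have hsub : (seg ++ y :: mid).Sublist (seg ++ y :: (mid ++ .inner w Y :: rest')) := by simp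
  simp only [List.length_append, List.length_cons] at hsplit ⊢
  cases Y with
  | B =>
    have hyR := IsDirPath.of_append_right (p := seg) (by simpa using hR) rfl
    have hpre' :=
      List.disjoint_of_subset_right (List.map_subset _ (List.subset_append_right _ _)) hpre
    exact (false_of_first_common_inner_B hM hyR (ne_of_mem_of_not_mem (by simp) hs) hQ (by simp)
      hpre' hmid).elim
  | A =>
    cases Z with
    | B =>
      have := hPA _ (hQ.prefix.append_reverse_map_flip (z := .inner w .A) hR
        (hbody_ss.sublist hsub) (fun h => hs (hsub.subset h)) (fun h => ht (hsub.subset h)) hpre)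
      simp only [hsplit, List.length_append, List.length_cons, List.length_nil, List.length_map,
        List.length_reverse] at this
      omega
    | A =>
      have := length_lt_of_avoids_segment hM hP hPmin hPA (seg := seg ++ y :: mid)
        (rest := rest') (by simp [hsplit]) (by simpa using hhead) hQ.prefix hpre
      simp only [List.length_append, List.length_cons, List.length_nil] at this
      omega
termination_by rest.length

end Shortest

section Level

variable {G : SimpleGraph V} {M : Set (Sym2 V)} {P : List (GMNode V)} {v u : V} {X : Lbl}

theorem gmLevel_inner_B_eq_of_append (hM : IsMatchingOn G M) {l : ℕ}
    (hl : gmLevel G M (.inner v X) = l) (hP : IsSSPath G M P (.inner v X))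
    (hPlen : P.length = l + 1)
    (hA : (l : ℕ∞) ≤ gmLevel G M (.inner u .A)) {pre post : List (GMNode V)}
    (hsplit : P = pre ++ .inner u .B :: post) :
    gmLevel G M (.inner u .B) = pre.length := by
  refine le_antisymm ?_ (le_gmLevel_iff.2 fun Q hQ => ?_)
  · have := gmLevel_le (hsplit ▸ hP).prefix
    rwa [List.length_append, List.length_singleton, Nat.add_sub_cancel] at this
  · have hPmin := le_gmLevel_iff.1 hl.ge
    have hPA := le_gmLevel_iff.1 hA
    exact length_lt_of_avoids_segment hM hP (fun Q hQ => hPlen ▸ hPmin Q hQ)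
      (fun Q hQ => hPlen ▸ hPA Q hQ) (seg := []) hsplit rfl hQ (by simp)

end Level

/-- If `[u₁,B]` and `[u₂,B]` are distinct nodes each lying on every shortest
strongly simple path from `s` to `[v,X]` (where `level([v,X]) = l`), and
`level([u₁,A]) ≥ l`, `level([u₂,A]) ≥ l` (undefined levels counting as `⊤`),
then `level([u₁,B]) ≠ level([u₂,B])`. -/
theorem dom_levels_distinct (G : SimpleGraph V) (M : Set (Sym2 V))
    (hM : IsMatchingOn G M)
    (v : V) (X : Lbl) (l : ℕ) (hl : gmLevel G M (.inner v X) = (l : ℕ∞))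
    (u₁ u₂ : V) (hne : u₁ ≠ u₂)
    (h₁ : ∀ p : List (GMNode V), IsDirPath (gmAdj G M) p GMNode.s (.inner v X) →
        StronglySimple p → p.length - 1 = l → GMNode.inner u₁ Lbl.B ∈ p)
    (h₂ : ∀ p : List (GMNode V), IsDirPath (gmAdj G M) p GMNode.s (.inner v X) →
        StronglySimple p → p.length - 1 = l → GMNode.inner u₂ Lbl.B ∈ p)
    (hA₁ : (l : ℕ∞) ≤ gmLevel G M (.inner u₁ .A))
    (hA₂ : (l : ℕ∞) ≤ gmLevel G M (.inner u₂ .A)) :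
    gmLevel G M (.inner u₁ .B) ≠ gmLevel G M (.inner u₂ .B) := by
  obtain ⟨P, hP, hPlen⟩ := exists_isSSPath_of_gmLevel_eq hl
  obtain ⟨pre₁, post₁, hsplit₁⟩ := List.append_of_mem (h₁ P hP.1 hP.2 (by omega))
  obtain ⟨pre₂, post₂, hsplit₂⟩ := List.append_of_mem (h₂ P hP.1 hP.2 (by omega))
  rw [gmLevel_inner_B_eq_of_append hM hl hP hPlen hA₁ hsplit₁,
    gmLevel_inner_B_eq_of_append hM hl hP hPlen hA₂ hsplit₂, Ne, Nat.cast_inj]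
  intro hlen
  have := (List.append_inj (hsplit₁.symm.trans hsplit₂) hlen).2
  exact hne (GMNode.inner.inj (List.cons.inj this).1).1
end

section
/- (Necessity of the optimality conditions.) Assume the dual feasibility invariant w(i,j) ≤ d(i,j) holds for all (i,j) ∈ E, and let M ⊆ E be a matching with w(M) = Σ_{i ∈ V} π(i) + Σ_{E_l ∈ F} c(E_l)·μ(E_l). Then: (1) r(i,j) := d(i,j) − w(i,j) = 0 for all (i,j) ∈ M; (2) π(i) = 0 for every M-free node i ∈ V; and (3) for every E_l ∈ F with μ(E_l) > 0 one has |E_l ∩ M| = c(E_l). -/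
open Finset

variable {V : Type*} [Fintype V] [DecidableEq V]

/-- `M` is a matching contained in the edge set `S`: a set of edges of `S`,
no two of which share a node. -/
def IsMatchingIn (S M : Finset (Sym2 V)) : Prop :=
  M ⊆ S ∧ ∀ e ∈ M, ∀ f ∈ M, ∀ v : V, v ∈ e → v ∈ f → e = f

/-- A node is `M`-free if it is incident to no edge of `M`. -/
def MFreeF (M : Finset (Sym2 V)) (v : V) : Prop := ∀ e ∈ M, v ∉ e

/-- The dual weight `d(i,j) = π(i) + π(j) + Σ_{E_l ∈ F, (i,j) ∈ E_l} μ(E_l)`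
of an edge. -/
noncomputable def dualWeight (π : V → ℝ) (F : Finset (Finset (Sym2 V)))
    (μ : Finset (Sym2 V) → ℝ) (e : Sym2 V) : ℝ :=
  Sym2.lift ⟨fun i j => π i + π j, fun _ _ => add_comm _ _⟩ e +
    ∑ S ∈ F.filter (fun S => e ∈ S), μ S

/-- `c(S)`: the maximum cardinality of a matching contained in `S`. -/
noncomputable def matchNum (S : Finset (Sym2 V)) : ℕ :=
  sSup {n : ℕ | ∃ M : Finset (Sym2 V), IsMatchingIn S M ∧ M.card = n}

/-- The two-element vertex set of an edge. -/
def vset (e : Sym2 V) : Finset V :=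
  Sym2.lift ⟨fun i j => ({i, j} : Finset V), fun i j => Finset.pair_comm i j⟩ e

omit [Fintype V] in
lemma mem_vset {v : V} {e : Sym2 V} : v ∈ vset e ↔ v ∈ e := by
  induction e using Sym2.inductionOn with
  | hf i j => simp [vset, Sym2.mem_iff]

omit [Fintype V] in
lemma lift_eq_sum (π : V → ℝ) (e : Sym2 V) (he : ¬e.IsDiag) :
    Sym2.lift ⟨fun i j => π i + π j, fun _ _ => add_comm _ _⟩ e
      = ∑ v ∈ vset e, π v := by
  induction e using Sym2.inductionOn with
  | hf i j =>
    rw [Sym2.mk_isDiag_iff] at he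
    simp [vset, Finset.sum_pair he]

omit [Fintype V] in
lemma le_matchNum {S M : Finset (Sym2 V)} (h : IsMatchingIn S M) :
    M.card ≤ matchNum S :=
  le_csSup ⟨S.card, fun n ⟨M', hM', hc⟩ => hc ▸ Finset.card_le_card hM'.1⟩
    ⟨M, h, rfl⟩

/-- Necessity of the optimality conditions: under dual feasibility, if the
matching `M` satisfies `w(M) = Σ_{i ∈ V} π(i) + Σ_{E_l ∈ F} c(E_l)·μ(E_l)`,
then (1) all edges of `M` have zero reduced cost, (2) every `M`-free node has
zero node weight, and (3) `μ(E_l) > 0` implies `|E_l ∩ M| = c(E_l)`. -/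
theorem optimality_necessary
    (E : Finset (Sym2 V)) (hE : ∀ e ∈ E, ¬e.IsDiag)
    (w : Sym2 V → ℝ) (hw : ∀ e ∈ E, 0 < w e)
    (π : V → ℝ) (hπ : ∀ i : V, 0 ≤ π i)
    (F : Finset (Finset (Sym2 V))) (hF : ∀ S ∈ F, S ⊆ E)
    (μ : Finset (Sym2 V) → ℝ) (hμ : ∀ S ∈ F, 0 ≤ μ S)
    (hfeas : ∀ e ∈ E, w e ≤ dualWeight π F μ e)
    (M : Finset (Sym2 V)) (hM : IsMatchingIn E M)
    (hopt : ∑ e ∈ M, w e = ∑ i : V, π i + ∑ S ∈ F, (matchNum S : ℝ) * μ S) :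
    (∀ e ∈ M, dualWeight π F μ e - w e = 0) ∧
      (∀ i : V, MFreeF M i → π i = 0) ∧
      (∀ S ∈ F, 0 < μ S → (S ∩ M).card = matchNum S) := by
  classical
  have hMnd : ∀ e ∈ M, ¬e.IsDiag := fun e he => hE e (hM.1 he)
  set cover : Finset V := M.biUnion vset with hcover
  -- sum of π over cover equals sum of lifts over M
  have hdisj : (M : Set (Sym2 V)).PairwiseDisjoint vset := by
    intro e he f hf hef
    simp only [Function.onFun]
    rw [Finset.disjoint_left]
    intro v hv hv'
    exact hef (hM.2 e he f hf v (mem_vset.mp hv) (mem_vset.mp hv'))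
  have h1 : ∑ e ∈ M, Sym2.lift ⟨fun i j => π i + π j, fun _ _ => add_comm _ _⟩ e
      = ∑ v ∈ cover, π v := by
    rw [hcover, Finset.sum_biUnion hdisj]
    exact Finset.sum_congr rfl fun e he => lift_eq_sum π e (hMnd e he)
  -- double counting the μ part
  have h2 : ∑ e ∈ M, ∑ S ∈ F.filter (fun S => e ∈ S), μ S
      = ∑ S ∈ F, ((S ∩ M).card : ℝ) * μ S := by
    have : ∀ e, ∑ S ∈ F.filter (fun S => e ∈ S), μ S
        = ∑ S ∈ F, if e ∈ S then μ S else 0 := fun e =>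
      (Finset.sum_filter _ _)
    simp_rw [this]
    rw [Finset.sum_comm]
    refine Finset.sum_congr rfl fun S hS => ?_
    rw [← Finset.sum_filter, Finset.sum_const, Finset.filter_mem_eq_inter,
      Finset.inter_comm, nsmul_eq_mul]
  -- cardinality bound
  have hcard : ∀ S ∈ F, (S ∩ M).card ≤ matchNum S := by
    intro S hS
    refine le_matchNum ⟨Finset.inter_subset_left, ?_⟩
    intro e he f hf v hv hv'
    exact hM.2 e (Finset.mem_inter.mp he).2 f (Finset.mem_inter.mp hf).2 v hv hv'
  -- the three nonnegative slack sums
  have hsplit : ∑ v ∈ (univ \ cover), π v + ∑ v ∈ cover, π v = ∑ v : V, π v :=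
    Finset.sum_sdiff (Finset.subset_univ cover)
  have hdsum : ∑ e ∈ M, dualWeight π F μ e
      = ∑ v ∈ cover, π v + ∑ S ∈ F, ((S ∩ M).card : ℝ) * μ S := by
    unfold dualWeight
    rw [Finset.sum_add_distrib, h1, h2]
  have hAterm : ∀ e ∈ M, 0 ≤ dualWeight π F μ e - w e := fun e he =>
    sub_nonneg.mpr (hfeas e (hM.1 he))
  have hBterm : ∀ v ∈ univ \ cover, 0 ≤ π v := fun v _ => hπ v
  have hCterm : ∀ S ∈ F, 0 ≤ ((matchNum S : ℝ) - ((S ∩ M).card : ℝ)) * μ S := by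
    intro S hS
    have := hcard S hS
    have h1 : ((S ∩ M).card : ℝ) ≤ (matchNum S : ℝ) := by exact_mod_cast this
    exact mul_nonneg (by linarith) (hμ S hS)
  have hkey : ∑ e ∈ M, (dualWeight π F μ e - w e) + ∑ v ∈ (univ \ cover), π v
      + ∑ S ∈ F, ((matchNum S : ℝ) - ((S ∩ M).card : ℝ)) * μ S = 0 := by
    rw [Finset.sum_sub_distrib, hdsum]
    have hC : ∑ S ∈ F, ((matchNum S : ℝ) - ((S ∩ M).card : ℝ)) * μ S
        = ∑ S ∈ F, (matchNum S : ℝ) * μ S - ∑ S ∈ F, ((S ∩ M).card : ℝ) * μ S := by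
      rw [← Finset.sum_sub_distrib]
      exact Finset.sum_congr rfl fun S _ => sub_mul _ _ _
    rw [hC]
    linarith [hsplit, hopt]
  have hA0 : ∑ e ∈ M, (dualWeight π F μ e - w e) = 0 := by
    have hB := Finset.sum_nonneg hBterm
    have hC := Finset.sum_nonneg hCterm
    have hA := Finset.sum_nonneg hAterm
    linarith
  have hB0 : ∑ v ∈ (univ \ cover), π v = 0 := by
    have hB := Finset.sum_nonneg hBterm
    have hC := Finset.sum_nonneg hCterm
    have hA := Finset.sum_nonneg hAterm
    linarith
  have hC0 : ∑ S ∈ F, ((matchNum S : ℝ) - ((S ∩ M).card : ℝ)) * μ S = 0 := by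
    have hB := Finset.sum_nonneg hBterm
    have hC := Finset.sum_nonneg hCterm
    have hA := Finset.sum_nonneg hAterm
    linarith
  refine ⟨?_, ?_, ?_⟩
  · exact fun e he =>
      (Finset.sum_eq_zero_iff_of_nonneg hAterm).mp hA0 e he
  · intro i hi
    have hicov : i ∉ cover := by
      intro h
      obtain ⟨e, he, hv⟩ := Finset.mem_biUnion.mp h
      exact hi e he (mem_vset.mp hv)
    exact (Finset.sum_eq_zero_iff_of_nonneg hBterm).mp hB0 i
      (Finset.mem_sdiff.mpr ⟨Finset.mem_univ i, hicov⟩)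
  · intro S hS hμS
    have := (Finset.sum_eq_zero_iff_of_nonneg hCterm).mp hC0 S hS
    rcases mul_eq_zero.mp this with h | h
    · have : ((S ∩ M).card : ℝ) = (matchNum S : ℝ) := by linarith
      exact_mod_cast this
    · exact absurd h (ne_of_gt hμS)
end
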